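/- (Ordering of credibility factors in the dynamic Poisson-gamma model, arbitrary means.) Let T ≥ 2 be an integer, ρ ∈ [0,1), σ > 0, ψ > 0, and let λ_1,…,λ_T, λ_{T+1} > 0 be real numbers. Let Σ_T be the T×T matrix with [Σ_T]_{t,t} = ψλ_t + σ²λ_t² and [Σ_T]_{s,t} = σ²λ_sλ_t ρ^{|s−t|} for s ≠ t, and let c ∈ ℝ^T with c_t = σ²λ_tλ_{T+1}ρ^{T+1−t}. Then Σ_T is invertible and the credibility factors α̂ = Σ_T^{−1}c satisfy α̂_1 ≤ α̂_2 ≤ … ≤ α̂_T, with strict inequalities whenever ρ ∈ (0,1). -/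

import Mathlib

/-!
Write `Σ_T = ψΛ + σ²ΛRΛ` with `Λ = diag(λ_t)` and `R = (ρ^{|s-t|})` the Kac–Murdock–Szegő
matrix. `R` is positive semidefinite, so `Σ_T` is positive definite. Since `R⁻¹` is tridiagonal,
cancelling `Λ` in `Σ_T α = c` and multiplying by `(1 - ρ²)R⁻¹` turns the system into a
three-term recurrence: `ρψ` times the second difference of `α` is a nonnegative multiple of `α`,
with one boundary condition at each end. Such a recurrence propagates the sign of `α_1` into
convexity of `α`; the boundary condition at `T` then forces `α_1 > 0`, hence `α` is strictly
increasing.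
-/

open Matrix

/-- Covariance matrix of the observations in the AR(1) state-space model:
diagonal entries `q_t + σ²λ_t²`, off-diagonal entries `σ²λ_sλ_tρ^{|s−t|}`
(one-based sequences `lam`, `q`). -/
noncomputable def covMat (T : ℕ) (ρ σ : ℝ) (lam q : ℕ → ℝ) :
    Matrix (Fin T) (Fin T) ℝ :=
  Matrix.of fun s t =>
    if s = t then q ((s : ℕ) + 1) + σ ^ 2 * (lam ((s : ℕ) + 1)) ^ 2
    else σ ^ 2 * lam ((s : ℕ) + 1) * lam ((t : ℕ) + 1) *
      ρ ^ (Int.natAbs ((s : ℤ) - (t : ℤ)))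

open Finset

noncomputable def discountedSum (ρ : ℝ) (w : ℕ → ℝ) (n : ℕ) : ℝ :=
  ∑ s ∈ range n, ρ ^ (n - 1 - s) * w s

noncomputable def kmsRow (ρ : ℝ) (w : ℕ → ℝ) (n t : ℕ) : ℝ :=
  ∑ s ∈ range n, ρ ^ Int.natAbs ((t : ℤ) - s) * w s

section KMS

variable (ρ : ℝ) (w : ℕ → ℝ) (n : ℕ)

@[simp]
lemma discountedSum_zero : discountedSum ρ w 0 = 0 := by
  simp [discountedSum]

lemma discountedSum_succ : discountedSum ρ w (n + 1) = ρ * discountedSum ρ w n + w n := by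
  rw [discountedSum, sum_range_succ, discountedSum, mul_sum]
  congr 1
  · refine sum_congr rfl fun s hs => ?_
    rw [show n + 1 - 1 - s = n - 1 - s + 1 by grind, pow_succ]
    ring
  · simp

lemma kmsRow_self : kmsRow ρ w n n = ρ * discountedSum ρ w n := by
  rw [kmsRow, discountedSum, mul_sum]
  refine sum_congr rfl fun s hs => ?_
  rw [show Int.natAbs ((n : ℤ) - s) = n - 1 - s + 1 by grind, pow_succ]
  ring

lemma pow_natAbs_sub_sub_mul_pow_natAbs_succ_sub (t s : ℕ) :
    ρ ^ Int.natAbs ((t : ℤ) - s) - ρ * ρ ^ Int.natAbs (((t + 1 : ℕ) : ℤ) - s) =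
      if s ≤ t then (1 - ρ ^ 2) * ρ ^ (t - s) else 0 := by
  split_ifs with h
  · rw [show Int.natAbs ((t : ℤ) - s) = t - s by grind,
      show Int.natAbs (((t + 1 : ℕ) : ℤ) - s) = t - s + 1 by grind]
    ring
  · rw [show Int.natAbs ((t : ℤ) - s) = s - (t + 1) + 1 by grind,
      show Int.natAbs (((t + 1 : ℕ) : ℤ) - s) = s - (t + 1) by grind]
    ring

/-- The identity behind the tridiagonal inverse of the Kac–Murdock–Szegő matrix. -/
lemma kmsRow_sub_mul_kmsRow_succ {t : ℕ} (ht : t < n) :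
    kmsRow ρ w n t - ρ * kmsRow ρ w n (t + 1) = (1 - ρ ^ 2) * discountedSum ρ w (t + 1) := by
  have hfilter : (range n).filter (· ≤ t) = range (t + 1) := by
    ext s; simp only [mem_filter, mem_range]; omega
  simp only [kmsRow, mul_sum, ← sum_sub_distrib, ← mul_assoc, ← sub_mul,
    pow_natAbs_sub_sub_mul_pow_natAbs_succ_sub, ite_mul, zero_mul]
  rw [← sum_filter, hfilter, discountedSum, mul_sum]
  refine sum_congr rfl fun s hs => ?_
  rw [Nat.add_sub_cancel]
  ring

lemma kmsForm_succ :
    ∑ t ∈ range (n + 1), w t * kmsRow ρ w (n + 1) t =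
      ∑ t ∈ range n, w t * kmsRow ρ w n t + 2 * ρ * discountedSum ρ w n * w n + w n ^ 2 := by
  have hrow : ∀ t, kmsRow ρ w (n + 1) t = kmsRow ρ w n t + ρ ^ Int.natAbs ((t : ℤ) - n) * w n :=
    fun t => sum_range_succ _ _
  have hcross :
      ∑ t ∈ range n, w t * (ρ ^ Int.natAbs ((t : ℤ) - n) * w n) = kmsRow ρ w n n * w n := by
    rw [kmsRow, sum_mul]
    refine sum_congr rfl fun t _ => ?_
    rw [show Int.natAbs ((t : ℤ) - n) = Int.natAbs ((n : ℤ) - t) by grind]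
    ring
  simp only [sum_range_succ _ n, hrow, mul_add, sum_add_distrib, hcross, kmsRow_self, sub_self,
    Int.natAbs_zero, pow_zero]
  ring

lemma sq_discountedSum_le_kmsForm (h0 : 0 ≤ ρ) (h1 : ρ ≤ 1) :
    discountedSum ρ w n ^ 2 ≤ ∑ t ∈ range n, w t * kmsRow ρ w n t := by
  induction n with
  | zero => simp
  | succ n ih =>
    rw [kmsForm_succ, discountedSum_succ]
    have : ρ ^ 2 * discountedSum ρ w n ^ 2 ≤ discountedSum ρ w n ^ 2 :=
      mul_le_of_le_one_left (sq_nonneg _) (pow_le_one₀ h0 h1)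
    nlinarith

end KMS

lemma Fin.exists_nat_fun {α : Type*} [Zero α] {n : ℕ} (x : Fin n → α) :
    ∃ w : ℕ → α, x = fun i : Fin n => w i :=
  ⟨fun k => if h : k < n then x ⟨k, h⟩ else 0, by simp⟩

noncomputable def kmsMatrix (n : ℕ) (ρ : ℝ) : Matrix (Fin n) (Fin n) ℝ :=
  of fun s t => ρ ^ Int.natAbs ((s : ℤ) - t)

lemma kmsMatrix_mulVec (n : ℕ) (ρ : ℝ) (w : ℕ → ℝ) (t : Fin n) :
    (kmsMatrix n ρ *ᵥ fun i => w i) t = kmsRow ρ w n t := by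
  simp only [mulVec, dotProduct, kmsMatrix, of_apply, kmsRow]
  exact Fin.sum_univ_eq_sum_range (fun s => ρ ^ Int.natAbs ((t : ℤ) - s) * w s) n

lemma kmsMatrix_posSemidef (n : ℕ) {ρ : ℝ} (h0 : 0 ≤ ρ) (h1 : ρ ≤ 1) :
    (kmsMatrix n ρ).PosSemidef := by
  refine .of_dotProduct_mulVec_nonneg ?_ fun x => ?_
  · ext s t
    simp only [conjTranspose_apply, kmsMatrix, of_apply, star_trivial]
    rw [← Int.natAbs_neg, neg_sub]
  · obtain ⟨w, rfl⟩ := Fin.exists_nat_fun x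
    have hform : star (fun i : Fin n => w i) ⬝ᵥ (kmsMatrix n ρ *ᵥ fun i => w i) =
        ∑ t ∈ range n, w t * kmsRow ρ w n t := by
      simp only [dotProduct, star_trivial, kmsMatrix_mulVec]
      exact Fin.sum_univ_eq_sum_range (fun t => w t * kmsRow ρ w n t) n
    exact hform ▸ (sq_nonneg _).trans (sq_discountedSum_le_kmsForm ρ w n h0 h1)

lemma covMat_eq (T : ℕ) (ρ σ ψ : ℝ) (lam : ℕ → ℝ) :
    covMat T ρ σ lam (fun t => ψ * lam t) =
      ψ • diagonal (fun i : Fin T => lam (i + 1)) +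
        σ ^ 2 • (diagonal (fun i : Fin T => lam (i + 1)) * kmsMatrix T ρ *
          diagonal (fun i : Fin T => lam (i + 1))) := by
  ext s t
  simp only [covMat, kmsMatrix, of_apply, Matrix.add_apply, Matrix.smul_apply, diagonal_apply,
    diagonal_mul, mul_diagonal, smul_eq_mul]
  split_ifs with h
  · subst h
    simp only [sub_self, Int.natAbs_zero, pow_zero]
    ring
  · ring

lemma covMat_posDef (T : ℕ) {ρ σ ψ : ℝ} (hρ0 : 0 ≤ ρ) (hρ1 : ρ ≤ 1) (hψ : 0 < ψ)
    {lam : ℕ → ℝ} (hlam : ∀ t, 1 ≤ t → t ≤ T → 0 < lam t) :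
    (covMat T ρ σ lam (fun t => ψ * lam t)).PosDef := by
  rw [covMat_eq]
  refine .add_posSemidef (.smul (.diagonal fun i => hlam _ (by omega) (by omega)) hψ)
    (.smul ?_ (sq_nonneg σ))
  simpa using (kmsMatrix_posSemidef T hρ0 hρ1).mul_mul_conjTranspose_same
    (diagonal fun i : Fin T => lam (i + 1))

lemma covMat_mulVec (T : ℕ) (ρ σ ψ : ℝ) (lam a : ℕ → ℝ) (t : Fin T) :
    (covMat T ρ σ lam (fun t => ψ * lam t) *ᵥ fun i => a i) t =
      lam (t + 1) * (ψ * a t + σ ^ 2 * kmsRow ρ (fun s => lam (s + 1) * a s) T t) := by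
  have hΛ : (diagonal (fun i : Fin T => lam (i + 1)) *ᵥ fun i => a i) =
      fun i : Fin T => lam (i + 1) * a i := funext fun i => mulVec_diagonal _ _ _
  rw [covMat_eq, add_mulVec, smul_mulVec, smul_mulVec, ← mulVec_mulVec, ← mulVec_mulVec, hΛ,
    Pi.add_apply, Pi.smul_apply, Pi.smul_apply, mulVec_diagonal,
    kmsMatrix_mulVec T ρ (fun s => lam (s + 1) * a s), smul_eq_mul, smul_eq_mul]
  ring

lemma tridiagonal_of_kmsRow_eq {n : ℕ} {ρ σ ψ μ : ℝ} {lam a : ℕ → ℝ}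
    (h : ∀ t < n + 2, ψ * a t + σ ^ 2 * kmsRow ρ (fun s => lam (s + 1) * a s) (n + 2) t =
      σ ^ 2 * μ * ρ ^ (n + 2 - t)) :
    ρ * ψ * (a 1 - a 0) = (ψ * (1 - ρ) + σ ^ 2 * (1 - ρ ^ 2) * lam 1) * a 0 ∧
    (∀ t < n, ρ * ψ * ((a (t + 2) - a (t + 1)) - (a (t + 1) - a t)) =
        (ψ * (1 - ρ) ^ 2 + σ ^ 2 * (1 - ρ ^ 2) * lam (t + 2)) * a (t + 1)) ∧
    (ψ * (1 - ρ) + σ ^ 2 * (1 - ρ ^ 2) * lam (n + 2)) * a (n + 1) + ρ * ψ * (a (n + 1) - a n) =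
        σ ^ 2 * (1 - ρ ^ 2) * ρ * μ := by
  set w : ℕ → ℝ := fun s => lam (s + 1) * a s
  have hD := discountedSum_succ ρ w
  have hstar : ∀ t < n + 1,
      ψ * (a t - ρ * a (t + 1)) + σ ^ 2 * (1 - ρ ^ 2) * discountedSum ρ w (t + 1) = 0 := by
    intro t ht
    have hpow : ρ ^ (n + 2 - t) = ρ * ρ ^ (n + 2 - (t + 1)) := by
      rw [← pow_succ']; congr 1; omega
    linear_combination h t (by omega) - ρ * h (t + 1) (by omega) -
      σ ^ 2 * kmsRow_sub_mul_kmsRow_succ ρ w (n + 2) (t := t) (by omega) + σ ^ 2 * μ * hpow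
  refine ⟨?_, fun t ht => ?_, ?_⟩
  · have hD0 := hD 0
    simp only [discountedSum_zero, mul_zero, zero_add] at hD0
    linear_combination -hstar 0 (by omega) + σ ^ 2 * (1 - ρ ^ 2) * hD0
  · linear_combination -hstar (t + 1) (by omega) + ρ * hstar t (by omega) +
      σ ^ 2 * (1 - ρ ^ 2) * hD (t + 1)
  · have hlastRow : kmsRow ρ w (n + 2) (n + 1) = discountedSum ρ w (n + 2) := by
      linear_combination kmsRow_sub_mul_kmsRow_succ ρ w (n + 2) (t := n + 1) (by omega) +
        ρ * kmsRow_self ρ w (n + 2)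
    have hpow : ρ ^ (n + 2 - (n + 1)) = ρ := by rw [show n + 2 - (n + 1) = 1 by omega, pow_one]
    linear_combination (1 - ρ ^ 2) * h (n + 1) (by omega) - ρ * hstar n (by omega) -
      σ ^ 2 * (1 - ρ ^ 2) * (hlastRow + hD (n + 1)) + σ ^ 2 * (1 - ρ ^ 2) * μ * hpow

lemma le_and_sub_le_of_convex {a : ℕ → ℝ} {n : ℕ}
    (hconv : ∀ t < n, 0 ≤ a (t + 1) → a (t + 1) - a t ≤ a (t + 2) - a (t + 1))
    (h0 : 0 ≤ a 0) (h01 : a 0 ≤ a 1) :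
    ∀ k ≤ n, a 0 ≤ a k ∧ a 1 - a 0 ≤ a (k + 1) - a k := by
  intro k hk
  induction k with
  | zero => exact ⟨le_rfl, le_rfl⟩
  | succ k ih =>
    obtain ⟨hak, hdk⟩ := ih (by omega)
    have hak1 : a 0 ≤ a (k + 1) := by linarith
    exact ⟨hak1, hdk.trans (hconv k (by omega) (h0.trans hak1))⟩

lemma strictMono_of_tridiagonal {a c : ℕ → ℝ} {n : ℕ} {p c₀ e r : ℝ} (hp : 0 < p)
    (hc₀ : 0 < c₀) (hc : ∀ t < n, 0 ≤ c (t + 1)) (he : 0 ≤ e) (hr : 0 < r)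
    (hfirst : p * (a 1 - a 0) = c₀ * a 0)
    (hmid : ∀ t < n, p * ((a (t + 2) - a (t + 1)) - (a (t + 1) - a t)) = c (t + 1) * a (t + 1))
    (hlast : e * a (n + 1) + p * (a (n + 1) - a n) = r) :
    ∀ k ≤ n, a k < a (k + 1) := by
  have hconv : ∀ b : ℕ → ℝ,
      (∀ t < n, p * ((b (t + 2) - b (t + 1)) - (b (t + 1) - b t)) = c (t + 1) * b (t + 1)) →
      ∀ t < n, 0 ≤ b (t + 1) → b (t + 1) - b t ≤ b (t + 2) - b (t + 1) := by
    intro b hb t ht hbt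
    have := (mul_nonneg_iff_of_pos_left hp).mp (hb t ht ▸ mul_nonneg (hc t ht) hbt)
    linarith
  have hmid_neg : ∀ t < n,
      p * ((-a (t + 2) - -a (t + 1)) - (-a (t + 1) - -a t)) = c (t + 1) * -a (t + 1) :=
    fun t ht => by linear_combination -hmid t ht
  have ha0 : 0 < a 0 := by
    by_contra! h
    have h01 : -a 0 ≤ -a 1 := by nlinarith
    obtain ⟨hlast_nonpos, hdiff_nonpos⟩ :=
      le_and_sub_le_of_convex (hconv (-a) hmid_neg) (neg_nonneg.mpr h) h01 n le_rfl
    simp only [Pi.neg_apply] at hlast_nonpos hdiff_nonpos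
    have : e * a (n + 1) ≤ 0 := mul_nonpos_of_nonneg_of_nonpos he (by linarith)
    have : p * (a (n + 1) - a n) ≤ 0 := mul_nonpos_of_nonneg_of_nonpos hp.le (by linarith)
    linarith
  have hd : 0 < a 1 - a 0 := (mul_pos_iff_of_pos_left hp).mp (hfirst ▸ mul_pos hc₀ ha0)
  intro k hk
  have := (le_and_sub_le_of_convex (hconv a hmid) ha0.le (sub_nonneg.mp hd.le) k hk).2
  linarith

lemma credibility_strictMono (n : ℕ) {ρ σ ψ : ℝ} (hρ0 : 0 < ρ) (hρ1 : ρ < 1) (hσ : 0 < σ)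
    (hψ : 0 < ψ) {lam : ℕ → ℝ} (hlam : ∀ t, 1 ≤ t → t ≤ n + 3 → 0 < lam t) :
    StrictMono ((covMat (n + 2) ρ σ lam (fun t => ψ * lam t))⁻¹ *ᵥ
      fun i : Fin (n + 2) => σ ^ 2 * lam (i + 1) * lam (n + 3) * ρ ^ (n + 2 - i)) := by
  set M := covMat (n + 2) ρ σ lam (fun t => ψ * lam t)
  obtain ⟨a, ha⟩ := Fin.exists_nat_fun (M⁻¹ *ᵥ
    fun i : Fin (n + 2) => σ ^ 2 * lam (i + 1) * lam (n + 3) * ρ ^ (n + 2 - i))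
  have hM : IsUnit M.det := (isUnit_iff_isUnit_det _).mp
    (covMat_posDef _ hρ0.le hρ1.le hψ fun t h1 h2 => hlam t h1 (by omega)).isUnit
  have hsolve : M *ᵥ (fun i : Fin (n + 2) => a i) =
      fun i : Fin (n + 2) => σ ^ 2 * lam (i + 1) * lam (n + 3) * ρ ^ (n + 2 - i) := by
    rw [← ha, mulVec_mulVec, mul_nonsing_inv _ hM, one_mulVec]
  have hrow : ∀ t < n + 2, ψ * a t + σ ^ 2 * kmsRow ρ (fun s => lam (s + 1) * a s) (n + 2) t =
      σ ^ 2 * lam (n + 3) * ρ ^ (n + 2 - t) := by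
    intro t ht
    have := congrFun hsolve ⟨t, ht⟩
    rw [covMat_mulVec] at this
    exact mul_left_cancel₀ (hlam (t + 1) (by omega) (by omega)).ne' (this.trans (by ring))
  obtain ⟨hfirst, hmid, hlast⟩ := tridiagonal_of_kmsRow_eq hrow
  have hρ' : 0 < 1 - ρ := sub_pos.mpr hρ1
  have hκ : 0 < σ ^ 2 * (1 - ρ ^ 2) := mul_pos (pow_pos hσ 2) (by nlinarith)
  have hκlam : ∀ t, 1 ≤ t → t ≤ n + 3 → 0 < σ ^ 2 * (1 - ρ ^ 2) * lam t :=
    fun t h1 h2 => mul_pos hκ (hlam t h1 h2)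
  have hsucc := strictMono_of_tridiagonal
    (c := fun t => ψ * (1 - ρ) ^ 2 + σ ^ 2 * (1 - ρ ^ 2) * lam (t + 1)) (mul_pos hρ0 hψ)
    (add_pos (mul_pos hψ hρ') (hκlam 1 le_rfl (by omega)))
    (fun t ht => (add_pos (mul_pos hψ (pow_pos hρ' 2)) (hκlam (t + 2) (by omega) (by omega))).le)
    (add_pos (mul_pos hψ hρ') (hκlam (n + 2) (by omega) (by omega))).le
    (mul_pos (mul_pos hκ hρ0) (hlam (n + 3) (by omega) le_rfl)) hfirst hmid hlast
  rw [ha, Fin.strictMono_iff_lt_succ]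
  exact fun i => hsucc i (by omega)

/-- ordering of credibility factors in the dynamic Poisson-gamma
model with arbitrary means.  Here `q_t = ψλ_t`, `c_t = σ²λ_tλ_{T+1}ρ^{T+1−t}`;
the covariance matrix is invertible and the credibility factors `α̂ = Σ_T⁻¹c`
satisfy `α̂_1 ≤ … ≤ α̂_T`, with strict inequalities when `ρ ∈ (0,1)`. -/
theorem stmt12 (T : ℕ) (hT : 2 ≤ T) (ρ : ℝ) (hρ1 : 0 ≤ ρ) (hρ2 : ρ < 1)
    (σ ψ : ℝ) (hσ : 0 < σ) (hψ : 0 < ψ) (lam : ℕ → ℝ)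
    (hlam : ∀ t, 1 ≤ t → t ≤ T + 1 → 0 < lam t) :
    IsUnit (covMat T ρ σ lam (fun t => ψ * lam t)) ∧
    (∀ s t : Fin T, s ≤ t →
      (covMat T ρ σ lam (fun t => ψ * lam t))⁻¹.mulVec
          (fun i : Fin T =>
            σ ^ 2 * lam ((i : ℕ) + 1) * lam (T + 1) * ρ ^ (T - (i : ℕ))) s ≤
        (covMat T ρ σ lam (fun t => ψ * lam t))⁻¹.mulVec
          (fun i : Fin T =>
            σ ^ 2 * lam ((i : ℕ) + 1) * lam (T + 1) * ρ ^ (T - (i : ℕ))) t) ∧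
    (0 < ρ → ∀ s t : Fin T, s < t →
      (covMat T ρ σ lam (fun t => ψ * lam t))⁻¹.mulVec
          (fun i : Fin T =>
            σ ^ 2 * lam ((i : ℕ) + 1) * lam (T + 1) * ρ ^ (T - (i : ℕ))) s <
        (covMat T ρ σ lam (fun t => ψ * lam t))⁻¹.mulVec
          (fun i : Fin T =>
            σ ^ 2 * lam ((i : ℕ) + 1) * lam (T + 1) * ρ ^ (T - (i : ℕ))) t) := by
  obtain ⟨n, rfl⟩ : ∃ n, T = n + 2 := ⟨T - 2, by omega⟩
  refine ⟨(covMat_posDef _ hρ1 hρ2.le hψ fun t h1 _ => hlam t h1 (by omega)).isUnit, ?_⟩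
  rcases hρ1.eq_or_lt with rfl | hρ
  · have hc : (fun i : Fin (n + 2) =>
        σ ^ 2 * lam (i + 1) * lam (n + 2 + 1) * 0 ^ (n + 2 - i)) = 0 :=
      funext fun i => by simp [zero_pow (Nat.sub_ne_zero_of_lt i.isLt)]
    simp only [hc, mulVec_zero]
    exact ⟨fun _ _ _ => le_rfl, fun h => absurd h (lt_irrefl 0)⟩
  · have hmono := credibility_strictMono n hρ hρ2 hσ hψ hlam
    exact ⟨fun _ _ h => hmono.monotone h, fun _ _ _ h => hmono h⟩
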